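/- arXiv:2407.05882 — 2 statements merged into one kernel-verified Lean document; each statement's English description precedes it below -/
import Mathlib

section
/- Let {u_k}_{k∈ℕ} be a sequence of functions on B₁ ⊂ ℝⁿ, each twice weakly differentiable with Hessian D²u_k ∈ L²(B₁), such that ‖D²u_k‖_{L²(B₁)} ≤ C₀ for all k for some constant C₀, and such that sup_{k} sup_{0<r<1} ⨍_{B_r} |D²u_k − (D²u_k)̄_{B_r}|² = +∞. Then for every 0 < δ < 1 there exist a sequence of radii r_m → 0 with 0 < r_m < 1 and indices k_m ∈ ℕ such that for all m, all k ∈ ℕ and all ρ with r_m ≤ ρ < 1: (1−δ) ⨍_{B_ρ} |D²u_k − (D²u_k)̄_{B_ρ}|² ≤ ⨍_{B_{r_m}} |D²u_{k_m} − (D²u_{k_m})̄_{B_{r_m}}|². -/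
/-!
The mean oscillation of `w` over `B_r` is at most `‖w‖²_{L²(B_r)} / |B_r|`, since the average
minimizes the `L²` distance to constants. Hence the supremum `S(ε)` of all oscillations at radii
`ρ ∈ [ε, 1)` is finite for every `ε > 0`, while the supremum over all radii is infinite. Given
`ε`, pick `r₀` where some oscillation exceeds `S(ε) / (1 - δ)`; as `1 - δ < 1`, some oscillation at
a radius `r₁ ≥ r₀` exceeds `(1 - δ) S(r₀)`. It is then almost maximal among all radii `≥ r₁`, and
it exceeds `S(ε)`, which forces `r₁ < ε`.
-/

open MeasureTheory Metric ENNReal Filter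

/-- For a matrix-valued function `w` (playing the role of a Hessian `D²u`), the average
over `B_r` of the squared Frobenius distance to its average, i.e.
`⨍_{B_r} |w − w̄_{B_r}|²`, valued in `[0,∞]`. -/
noncomputable def meanOsc2 {n : ℕ}
    (w : EuclideanSpace ℝ (Fin n) → Fin n → Fin n → ℝ) (r : ℝ) : ℝ≥0∞ :=
  (∫⁻ y in ball (0 : EuclideanSpace ℝ (Fin n)) r,
      ENNReal.ofReal (∑ i, ∑ j,
        (w y i j - ⨍ z in ball (0 : EuclideanSpace ℝ (Fin n)) r, w z i j) ^ 2)) /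
    volume (ball (0 : EuclideanSpace ℝ (Fin n)) r)

open ProbabilityTheory in
theorem lintegral_sq_sub_average_le {α : Type*} [MeasurableSpace α] {μ : Measure α}
    [IsFiniteMeasure μ] {f : α → ℝ} (hf : AEMeasurable f μ) :
    ∫⁻ x, ENNReal.ofReal ((f x - ⨍ y, f y ∂μ) ^ 2) ∂μ ≤ ∫⁻ x, ENNReal.ofReal (f x ^ 2) ∂μ := by
  rcases eq_zero_or_neZero μ with rfl | hμ
  · simp
  have hvar : evariance f ((μ Set.univ)⁻¹ • μ) ≤ ∫⁻ x, ‖f x‖ₑ ^ 2 ∂(μ Set.univ)⁻¹ • μ := by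
    rw [evariance_def' (hf.smul_measure _).aestronglyMeasurable]
    exact tsub_le_self
  rw [evariance_eq_lintegral_ofReal, ← average_eq'] at hvar
  simp_rw [← enorm_pow, Real.enorm_of_nonneg (sq_nonneg _), lintegral_smul_measure] at hvar
  exact (ENNReal.mul_le_mul_iff_right (by simp) (by simpa using hμ.out)).1 hvar

theorem lintegral_sum_sq_sub_average_le {α ι : Type*} [MeasurableSpace α] [Fintype ι]
    {μ : Measure α} [IsFiniteMeasure μ] {f : α → ι → ℝ} (hf : ∀ i, AEMeasurable (f · i) μ) :
    ∫⁻ x, ENNReal.ofReal (∑ i, (f x i - ⨍ y, f y i ∂μ) ^ 2) ∂μ ≤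
      ∫⁻ x, ENNReal.ofReal (∑ i, f x i ^ 2) ∂μ := by
  simp_rw [ENNReal.ofReal_sum_of_nonneg fun _ _ => sq_nonneg _]
  rw [lintegral_finsetSum' _ fun i _ => ((hf i).sub_const _).pow_const 2 |>.ennreal_ofReal,
    lintegral_finsetSum' _ fun i _ => ((hf i).pow_const 2).ennreal_ofReal]
  exact Finset.sum_le_sum fun i _ => lintegral_sq_sub_average_le (hf i)

theorem meanOsc2_le {n : ℕ} {w : EuclideanSpace ℝ (Fin n) → Fin n → Fin n → ℝ}
    (hw : ∀ i j, Measurable fun y => w y i j) {r R : ℝ} (hrR : r ≤ R) :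
    meanOsc2 w r ≤ (∫⁻ y in ball 0 R, ENNReal.ofReal (∑ i, ∑ j, w y i j ^ 2)) /
      volume (ball (0 : EuclideanSpace ℝ (Fin n)) r) := by
  have : IsFiniteMeasure (volume.restrict (ball (0 : EuclideanSpace ℝ (Fin n)) r)) :=
    isFiniteMeasure_restrict.2 measure_ball_lt_top.ne
  refine ENNReal.div_le_div_right ?_ _
  calc _ ≤ ∫⁻ y in ball 0 r, ENNReal.ofReal (∑ i, ∑ j, w y i j ^ 2) := by
        simp_rw [← Fintype.sum_prod_type']
        exact lintegral_sum_sq_sub_average_le fun ij => (hw ij.1 ij.2).aemeasurable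
    _ ≤ _ := lintegral_mono_set (ball_subset_ball hrR)

section Selection

variable {ι : Type*} (Q : ι → ℝ → ℝ≥0∞)

noncomputable def tailSup (r : ℝ) : ℝ≥0∞ := ⨆ k, ⨆ ρ ∈ Set.Ico r 1, Q k ρ

variable {Q}

theorem le_tailSup {k : ι} {r ρ : ℝ} (hrρ : r ≤ ρ) (hρ : ρ < 1) : Q k ρ ≤ tailSup Q r :=
  le_iSup_of_le k <| le_iSup₂_of_le ρ ⟨hrρ, hρ⟩ le_rfl

theorem exists_radius_almost_maximizing (hfin : ∀ ε > 0, tailSup Q ε ≠ ⊤)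
    (hblow : (⨆ (k : ι) (r : ℝ) (_ : 0 < r) (_ : r < 1), Q k r) = ⊤)
    {d : ℝ≥0∞} (hd₀ : d ≠ 0) (hd₁ : d < 1) {ε : ℝ} (hε : 0 < ε) :
    ∃ r k, 0 < r ∧ r < ε ∧ r < 1 ∧ ∀ k' ρ, r ≤ ρ → ρ < 1 → d * Q k' ρ ≤ Q k r := by
  have hdtop : d ≠ ⊤ := ne_top_of_lt hd₁
  obtain ⟨k₀, r₀, hr₀, hr₀₁, hQ₀⟩ : ∃ k r, 0 < r ∧ r < 1 ∧ tailSup Q ε / d < Q k r := by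
    have := (ENNReal.div_ne_top (hfin ε hε) hd₀).lt_top
    rw [← hblow] at this
    simpa only [lt_iSup_iff, exists_prop] using this
  have hS₀ : tailSup Q ε / d < tailSup Q r₀ := hQ₀.trans_le (le_tailSup le_rfl hr₀₁)
  have hS₀top : tailSup Q r₀ ≠ ⊤ := hfin r₀ hr₀
  obtain ⟨k₁, r₁, ⟨hr₀₁', hr₁⟩, hQ₁⟩ : ∃ k r, r ∈ Set.Ico r₀ 1 ∧ d * tailSup Q r₀ < Q k r := by
    have : d * tailSup Q r₀ < tailSup Q r₀ := by
      simpa using ENNReal.mul_lt_mul_left (pos_of_gt hS₀).ne' hS₀top hd₁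
    simpa only [tailSup, lt_iSup_iff, exists_prop] using this
  refine ⟨r₁, k₁, hr₀.trans_le hr₀₁', ?_, hr₁, fun k' ρ hρ hρ₁ => ?_⟩
  · by_contra! hεr₁
    have : tailSup Q ε < Q k₁ r₁ := calc
      tailSup Q ε = d * (tailSup Q ε / d) := (ENNReal.mul_div_cancel hd₀ hdtop).symm
      _ < d * tailSup Q r₀ := ENNReal.mul_lt_mul_right hd₀ hdtop hS₀
      _ < Q k₁ r₁ := hQ₁
    exact this.not_ge (le_tailSup hεr₁ hr₁)
  · exact (mul_le_mul_right (le_tailSup (hr₀₁'.trans hρ) hρ₁) d).trans hQ₁.le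

theorem exists_seq_radius_almost_maximizing (hfin : ∀ ε > 0, tailSup Q ε ≠ ⊤)
    (hblow : (⨆ (k : ι) (r : ℝ) (_ : 0 < r) (_ : r < 1), Q k r) = ⊤)
    {d : ℝ≥0∞} (hd₀ : d ≠ 0) (hd₁ : d < 1) :
    ∃ (rs : ℕ → ℝ) (ks : ℕ → ι), (∀ m, 0 < rs m ∧ rs m < 1) ∧ Tendsto rs atTop (nhds 0) ∧
      ∀ m k ρ, rs m ≤ ρ → ρ < 1 → d * Q k ρ ≤ Q (ks m) (rs m) := by
  choose rs ks hpos hsmall hlt hmax using fun m : ℕ =>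
    exists_radius_almost_maximizing hfin hblow hd₀ hd₁ (Nat.one_div_pos_of_nat (n := m))
  refine ⟨rs, ks, fun m => ⟨hpos m, hlt m⟩, ?_, hmax⟩
  exact tendsto_of_tendsto_of_tendsto_of_le_of_le tendsto_const_nhds
    tendsto_one_div_add_atTop_nhds_zero_nat (fun m => (hpos m).le) fun m => (hsmall m).le

end Selection

theorem tailSup_meanOsc2_ne_top {n : ℕ} {C : ℝ≥0∞} (hC : C ≠ ⊤)
    {w : ℕ → EuclideanSpace ℝ (Fin n) → Fin n → Fin n → ℝ}
    (hw : ∀ k i j, Measurable fun y => w k y i j)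
    (hL2 : ∀ k, ∫⁻ y in ball (0 : EuclideanSpace ℝ (Fin n)) 1,
      ENNReal.ofReal (∑ i, ∑ j, w k y i j ^ 2) ≤ C)
    {ε : ℝ} (hε : 0 < ε) : tailSup (fun k => meanOsc2 (w k)) ε ≠ ⊤ := by
  have hball : volume (ball (0 : EuclideanSpace ℝ (Fin n)) ε) ≠ 0 :=
    (measure_ball_pos volume _ hε).ne'
  refine ne_top_of_le_ne_top (ENNReal.div_ne_top hC hball) ?_
  refine iSup_le fun k => iSup₂_le fun ρ ⟨hερ, hρ⟩ => ?_
  exact (meanOsc2_le (hw k) hρ.le).trans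
    (ENNReal.div_le_div (hL2 k) (measure_mono (ball_subset_ball hερ)))

theorem selection_lemma_general (n : ℕ) (C₀ : ℝ)
    (w : ℕ → EuclideanSpace ℝ (Fin n) → Fin n → Fin n → ℝ)
    (hmeas : ∀ k i j, Measurable (fun y => w k y i j))
    (hL2 : ∀ k, ∫⁻ y in ball (0 : EuclideanSpace ℝ (Fin n)) 1,
        ENNReal.ofReal (∑ i, ∑ j, (w k y i j) ^ 2) ≤ ENNReal.ofReal (C₀ ^ 2))
    (hblow : (⨆ (k : ℕ) (r : ℝ) (_ : 0 < r) (_ : r < 1), meanOsc2 (w k) r) = ⊤)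
    (δ : ℝ) (hδ₀ : 0 < δ) (hδ₁ : δ < 1) :
    ∃ (rs : ℕ → ℝ) (ks : ℕ → ℕ),
      (∀ m, 0 < rs m ∧ rs m < 1) ∧
      Tendsto rs atTop (nhds 0) ∧
      ∀ (m k : ℕ) (ρ : ℝ), rs m ≤ ρ → ρ < 1 →
        ENNReal.ofReal (1 - δ) * meanOsc2 (w k) ρ ≤ meanOsc2 (w (ks m)) (rs m) :=
  exists_seq_radius_almost_maximizing
    (fun _ => tailSup_meanOsc2_ne_top ENNReal.ofReal_ne_top hmeas hL2) hblow
    (by simpa using hδ₁) (by rw [ENNReal.ofReal_lt_one]; linarith)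

/-- Selection lemma for the blow-up argument, phrased for the matrix-valued functions
`w k = D²u_k ∈ L²(B₁)`: if the `L²(B₁)` norms are uniformly bounded by `C₀` but
`sup_k sup_{0<r<1} ⨍_{B_r} |w k − (w k)̄_{B_r}|² = ∞`, then for every `0 < δ < 1` there
are radii `r_m → 0` and indices `k_m` such that
`(1−δ) ⨍_{B_ρ} |w k − (w k)̄_{B_ρ}|² ≤ ⨍_{B_{r_m}} |w (k_m) − (w (k_m))̄_{B_{r_m}}|²`
for all `m`, all `k` and all `r_m ≤ ρ < 1`. -/
theorem selection_lemma (n : ℕ) (hn : 1 ≤ n) (C₀ : ℝ)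
    (w : ℕ → EuclideanSpace ℝ (Fin n) → Fin n → Fin n → ℝ)
    (hmeas : ∀ k i j, Measurable (fun y => w k y i j))
    (hL2 : ∀ k, ∫⁻ y in ball (0 : EuclideanSpace ℝ (Fin n)) 1,
        ENNReal.ofReal (∑ i, ∑ j, (w k y i j) ^ 2) ≤ ENNReal.ofReal (C₀ ^ 2))
    (hblow : (⨆ (k : ℕ) (r : ℝ) (_ : 0 < r) (_ : r < 1), meanOsc2 (w k) r) = ⊤)
    (δ : ℝ) (hδ₀ : 0 < δ) (hδ₁ : δ < 1) :
    ∃ (rs : ℕ → ℝ) (ks : ℕ → ℕ),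
      (∀ m, 0 < rs m ∧ rs m < 1) ∧
      Tendsto rs atTop (nhds 0) ∧
      ∀ (m k : ℕ) (ρ : ℝ), rs m ≤ ρ → ρ < 1 →
        ENNReal.ofReal (1 - δ) * meanOsc2 (w k) ρ ≤ meanOsc2 (w (ks m)) (rs m) :=
  selection_lemma_general n C₀ w hmeas hL2 hblow δ hδ₀ hδ₁
end

section
/- Let n ≥ 1, N ≥ 1, and let p(x,t) be a real polynomial on ℝⁿ×ℝ of parabolic degree exactly N (i.e. of weighted degree N where each spatial variable x_i has weight 1 and t has weight 2). Then there exist a constant c > 0 and R₀ > 1 such that for every R ≥ R₀ and every constant a ∈ ℝ: ⨍_{Q_R} |p − a|² ≥ c R^{2N}. -/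
/-!
The parabolic dilation `δ_R (x, t) = (R x, R² t)` maps `Q_1` onto `Q_R` and preserves averages, and
`p ∘ δ_R = R^N p_N + O(R^{N-1})` uniformly on `Q_1`, where `p_N` is the weighted homogeneous
component of top degree. For the uniform probability measure on `Q_1` this gives
`⨍_{Q_R} |p - a|² ≥ R^{2N} Var(p_N) / 2 - O(R^{2N-2})`. Finally `Var(p_N) > 0`: otherwise `p_N`
would be constant near `0`, and a homogeneous polynomial of positive degree that is constant near
`0` vanishes.
-/

open MeasureTheory Metric

/-- The parabolic cube `Q_r = B_r(0) × (−r²/2, r²/2]` in `ℝⁿ × ℝ`. -/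
noncomputable def pCube0 {n : ℕ} (r : ℝ) : Set (EuclideanSpace ℝ (Fin n) × ℝ) :=
  (ball (0 : EuclideanSpace ℝ (Fin n)) r) ×ˢ Set.Ioc (-(r ^ 2) / 2) (r ^ 2 / 2)

/-- Parabolic weights on the variables of `ℝⁿ × ℝ`: each spatial variable has
weight `1` and the time variable has weight `2`. -/
def parWeight (n : ℕ) : (Fin n ⊕ Unit) → ℕ :=
  Sum.elim (fun _ => 1) (fun _ => 2)

/-- Evaluation of a polynomial in the variables `x₁, …, xₙ, t` at `z = (x, t) ∈ ℝⁿ × ℝ`. -/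
noncomputable def evalPar {n : ℕ} (P : MvPolynomial (Fin n ⊕ Unit) ℝ)
    (z : EuclideanSpace ℝ (Fin n) × ℝ) : ℝ :=
  MvPolynomial.eval (Sum.elim (fun i => z.1 i) (fun _ => z.2)) P


open MvPolynomial ProbabilityTheory Filter Topology
open scoped ENNReal

namespace MvPolynomial

variable {R σ : Type*} [CommSemiring R] {w : σ → ℕ} {φ : MvPolynomial σ R}

theorem IsWeightedHomogeneous.eval_pow_mul {m : ℕ} (hφ : φ.IsWeightedHomogeneous w m) (s : R)
    (x : σ → R) : eval (fun i => s ^ w i * x i) φ = s ^ m * eval x φ := by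
  induction hφ using IsWeightedHomogeneous.induction_on with
  | zero => simp
  | add p q _ _ hp hq => simp only [map_add, hp, hq, mul_add]
  | monomial d r hd =>
    simp only [eval_monomial, mul_pow, ← pow_mul, ← hd, Finsupp.weight_apply, Finsupp.prod,
      Finsupp.sum, smul_eq_mul, mul_comm (w _), Finset.prod_mul_distrib,
      Finset.prod_pow_eq_pow_sum]
    ring

theorem sum_range_weightedHomogeneousComponent {M : ℕ} (hφ : weightedTotalDegree w φ ≤ M) :
    ∑ k ∈ Finset.range (M + 1), weightedHomogeneousComponent w k φ = φ := by
  conv_rhs => rw [← sum_weightedHomogeneousComponent w φ]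
  refine (finsum_eq_sum_of_support_subset _ fun k hk => ?_).symm
  by_contra hkM
  simp only [Finset.coe_range, Set.mem_Iio, not_lt] at hkM
  exact hk (weightedHomogeneousComponent_eq_zero k φ (by omega))

theorem weightedHomogeneousComponent_weightedTotalDegree_ne_zero (hφ : φ ≠ 0) :
    weightedHomogeneousComponent w (weightedTotalDegree w φ) φ ≠ 0 := by
  obtain ⟨d, hd, hdeg⟩ :=
    Finset.exists_mem_eq_sup φ.support (support_nonempty.2 hφ) (Finsupp.weight w)
  intro h
  have hcoeff := congr_arg (coeff d) h
  rw [coeff_weightedHomogeneousComponent, weightedTotalDegree, if_pos hdeg.symm,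
    coeff_zero] at hcoeff
  exact mem_support_iff.1 hd hcoeff

end MvPolynomial

namespace MeasureTheory

variable {α β E : Type*} [MeasurableSpace α] [MeasurableSpace β] [NormedAddCommGroup E]
  [NormedSpace ℝ E]

theorem average_smul_measure (μ : Measure α) {c : ℝ≥0∞} (hc0 : c ≠ 0) (hc : c ≠ ∞)
    (f : α → E) : ⨍ x, f x ∂(c • μ) = ⨍ x, f x ∂μ := by
  rw [average_eq', average_eq', Measure.smul_apply, smul_smul, smul_eq_mul,
    ENNReal.mul_inv (.inl hc0) (.inl hc), mul_right_comm, ENNReal.inv_mul_cancel hc0 hc, one_mul]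

theorem _root_.MeasurableEmbedding.average_map {f : α → β} (hf : MeasurableEmbedding f)
    (μ : Measure α) (g : β → E) : ⨍ y, g y ∂(μ.map f) = ⨍ x, g (f x) ∂μ := by
  rw [average_eq', average_eq', hf.map_apply, Set.preimage_univ, ← Measure.map_smul,
    hf.integral_map]

theorem setAverage_comp_linearMap {F : Type*} [NormedAddCommGroup F] [NormedSpace ℝ F]
    [MeasurableSpace F] [BorelSpace F] [FiniteDimensional ℝ F] (μ : Measure F)
    [μ.IsAddHaarMeasure] {L : F →ₗ[ℝ] F} (hL : LinearMap.det L ≠ 0) (s : Set F) (g : F → E) :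
    ⨍ x in L ⁻¹' s, g (L x) ∂μ = ⨍ y in s, g y ∂μ := by
  have hL' : MeasurableEmbedding L :=
    (L.equivOfDetNeZero hL).toContinuousLinearEquiv.toHomeomorph.measurableEmbedding
  rw [← hL'.average_map, ← hL'.restrict_map, Measure.map_linearMap_addHaar_eq_smul_addHaar μ hL,
    Measure.restrict_smul, average_smul_measure _ (by simpa using hL) ENNReal.ofReal_ne_top]

end MeasureTheory

namespace ProbabilityTheory

variable {Ω : Type*} [MeasurableSpace Ω] {μ : Measure Ω} [IsProbabilityMeasure μ] {X Y : Ω → ℝ}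

theorem variance_le_integral_sub_sq (hX : AEStronglyMeasurable X μ) (a : ℝ) :
    Var[X; μ] ≤ ∫ ω, (X ω - a) ^ 2 ∂μ := by
  rw [← variance_sub_const hX a]
  exact variance_le_expectation_sq (hX.sub aestronglyMeasurable_const)

theorem variance_div_two_sub_sq_le_integral (hX : MemLp X 2 μ) (hY : AEStronglyMeasurable Y μ)
    {ε : ℝ} (hYε : ∀ᵐ ω ∂μ, |Y ω| ≤ ε) (a : ℝ) :
    Var[X; μ] / 2 - ε ^ 2 ≤ ∫ ω, (X ω + Y ω - a) ^ 2 ∂μ := by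
  have hY2 : MemLp Y 2 μ := .of_bound hY ε hYε
  have hXa : MemLp (fun ω => X ω - a) 2 μ := hX.sub (memLp_const a)
  calc Var[X; μ] / 2 - ε ^ 2 ≤ ∫ ω, ((X ω - a) ^ 2 / 2 - ε ^ 2) ∂μ := by
        rw [integral_sub (hXa.integrable_sq.div_const 2) (integrable_const _), integral_div,
          integral_const, probReal_univ, one_smul]
        gcongr
        exact variance_le_integral_sub_sq hX.1 a
    _ ≤ ∫ ω, (X ω + Y ω - a) ^ 2 ∂μ := by
        refine integral_mono_ae ((hXa.integrable_sq.div_const 2).sub (integrable_const _))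
          ((hX.add hY2).sub (memLp_const a)).integrable_sq ?_
        filter_upwards [hYε] with ω hω
        have hY2ε : Y ω ^ 2 ≤ ε ^ 2 := sq_le_sq' (abs_le.mp hω).1 (abs_le.mp hω).2
        -- `(u + v)² - (u² / 2 - v²) = (u + 2 v)² / 2`
        nlinarith [sq_nonneg (X ω - a + 2 * Y ω)]

end ProbabilityTheory

theorem exists_abs_sum_pow_mul_le {ι : Type*} {s : Set ι} {f : ℕ → ι → ℝ}
    (hf : ∀ k, ∃ C, ∀ z ∈ s, |f k z| ≤ C) (N : ℕ) :
    ∃ C, ∀ R ≥ 1, ∀ z ∈ s, |∑ k ∈ Finset.range N, R ^ k * f k z| ≤ C * R ^ (N - 1) := by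
  choose C hC using hf
  refine ⟨∑ k ∈ Finset.range N, C k, fun R hR z hz => ?_⟩
  calc |∑ k ∈ Finset.range N, R ^ k * f k z|
      ≤ ∑ k ∈ Finset.range N, |R ^ k * f k z| := Finset.abs_sum_le_sum_abs _ _
    _ ≤ ∑ k ∈ Finset.range N, C k * R ^ (N - 1) := by
        refine Finset.sum_le_sum fun k hk => ?_
        rw [abs_mul, abs_of_nonneg (by positivity), mul_comm]
        have hkN : k ≤ N - 1 := by have := Finset.mem_range.1 hk; omega
        exact mul_le_mul (hC k z hz) (pow_le_pow_right₀ hR hkN) (by positivity)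
          ((abs_nonneg _).trans (hC k z hz))
    _ = (∑ k ∈ Finset.range N, C k) * R ^ (N - 1) := (Finset.sum_mul _ _ _).symm

section Parabolic

variable {n : ℕ}

def parDilation (n : ℕ) (R : ℝ) : Module.End ℝ (EuclideanSpace ℝ (Fin n) × ℝ) :=
  (R • LinearMap.id).prodMap (R ^ 2 • LinearMap.id)

theorem parDilation_apply (R : ℝ) (z : EuclideanSpace ℝ (Fin n) × ℝ) :
    parDilation n R z = (R • z.1, R ^ 2 * z.2) :=
  rfl

theorem det_parDilation (R : ℝ) : LinearMap.det (parDilation n R) = R ^ n * R ^ 2 := by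
  simp [parDilation, LinearMap.det_prodMap, LinearMap.det_smul]

theorem preimage_parDilation_pCube0 {R : ℝ} (hR : 0 < R) :
    parDilation n R ⁻¹' pCube0 R = pCube0 1 := by
  ext ⟨x, t⟩
  simp only [pCube0, Set.mem_preimage, parDilation_apply, Set.mem_prod, mem_ball_zero_iff,
    norm_smul, Real.norm_of_nonneg hR.le, Set.mem_Ioc]
  have hR2 : 0 < R ^ 2 := by positivity
  refine and_congr (mul_lt_iff_lt_one_right hR)
    ⟨fun ⟨h1, h2⟩ => ⟨?_, ?_⟩, fun ⟨h1, h2⟩ => ⟨?_, ?_⟩⟩ <;> nlinarith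

theorem evalPar_parDilation {P : MvPolynomial (Fin n ⊕ Unit) ℝ} {k : ℕ}
    (hP : P.IsWeightedHomogeneous (parWeight n) k) (R : ℝ) (z : EuclideanSpace ℝ (Fin n) × ℝ) :
    evalPar P (parDilation n R z) = R ^ k * evalPar P z := by
  have hpt : Sum.elim (fun i => (parDilation n R z).1 i) (fun _ => (parDilation n R z).2)
      = fun i => R ^ parWeight n i * Sum.elim (fun i => z.1 i) (fun _ => z.2) i := by
    funext i
    rcases i with i | _ <;> simp [parDilation_apply, parWeight]
  rw [evalPar, hpt, hP.eval_pow_mul, evalPar]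

theorem evalPar_parDilation_eq_sum {P : MvPolynomial (Fin n ⊕ Unit) ℝ} {M : ℕ}
    (hP : weightedTotalDegree (parWeight n) P ≤ M) (R : ℝ) (z : EuclideanSpace ℝ (Fin n) × ℝ) :
    evalPar P (parDilation n R z)
      = ∑ k ∈ Finset.range (M + 1),
          R ^ k * evalPar (weightedHomogeneousComponent (parWeight n) k P) z := by
  conv_lhs => rw [← sum_range_weightedHomogeneousComponent hP]
  simp only [evalPar, map_sum]
  exact Finset.sum_congr rfl fun k _ =>
    evalPar_parDilation (weightedHomogeneousComponent_isWeightedHomogeneous k P) R z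

@[fun_prop]
theorem continuous_evalPar (P : MvPolynomial (Fin n ⊕ Unit) ℝ) : Continuous (evalPar P) :=
  (continuous_eval P).comp <| continuous_pi fun i => by
    rcases i with i | _
    · exact (EuclideanSpace.proj i).continuous.comp continuous_fst
    · exact continuous_snd

theorem eq_zero_of_eventually_evalPar_eq {P : MvPolynomial (Fin n ⊕ Unit) ℝ} {N : ℕ}
    (hP : P.IsWeightedHomogeneous (parWeight n) N) (hN : N ≠ 0) {c : ℝ}
    (h : ∀ᶠ z in 𝓝 0, evalPar P z = c) : P = 0 := by
  have hc : c = 0 := by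
    simpa [← h.self_of_nhds, parDilation_apply, hN, Prod.mk_zero_zero] using
      evalPar_parDilation hP 0 0
  have hzero : ∀ z, evalPar P z = 0 := by
    intro z
    have hcont : Continuous fun s : ℝ => parDilation n s z := by
      simp only [parDilation_apply]
      fun_prop
    have hlim : Tendsto (fun s : ℝ => parDilation n s z) (𝓝[≠] 0) (𝓝 0) :=
      tendsto_nhdsWithin_of_tendsto_nhds <| by
        simpa [parDilation_apply, Prod.mk_zero_zero] using hcont.tendsto 0
    obtain ⟨s, hs, hs0⟩ := ((hlim.eventually h).and self_mem_nhdsWithin).exists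
    rw [evalPar_parDilation hP, hc] at hs
    exact (mul_eq_zero.mp hs).resolve_left (pow_ne_zero _ hs0)
  refine MvPolynomial.funext fun x => ?_
  rw [map_zero, ← hzero (WithLp.toLp 2 fun i => x (.inl i), x (.inr ())), evalPar]
  congr
  ext (i | _) <;> rfl

theorem measurableSet_pCube0 (r : ℝ) : MeasurableSet (pCube0 (n := n) r) :=
  measurableSet_ball.prod measurableSet_Ioc

theorem isBounded_pCube0 (r : ℝ) : Bornology.IsBounded (pCube0 (n := n) r) :=
  isBounded_ball.prod (Metric.isBounded_Ioc _ _)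

theorem pCube0_mem_nhds {r : ℝ} (hr : 0 < r) : pCube0 (n := n) r ∈ 𝓝 0 :=
  prod_mem_nhds (ball_mem_nhds 0 hr)
    (Ioc_mem_nhds (by linarith [sq_pos_of_pos hr]) (by positivity))

theorem Continuous.exists_abs_le_on_pCube0 {f : EuclideanSpace ℝ (Fin n) × ℝ → ℝ}
    (hf : Continuous f) (r : ℝ) : ∃ C, ∀ z ∈ pCube0 r, |f z| ≤ C :=
  have ⟨C, hC⟩ :=
    (isBounded_pCube0 r).isCompact_closure.exists_bound_of_continuousOn hf.continuousOn
  ⟨C, fun z hz => hC z (subset_closure hz)⟩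

instance : (volume : Measure (EuclideanSpace ℝ (Fin n) × ℝ)).IsAddHaarMeasure := by
  rw [Measure.volume_eq_prod]
  infer_instance

theorem setAverage_pCube0_eq {R : ℝ} (hR : 0 < R) (f : EuclideanSpace ℝ (Fin n) × ℝ → ℝ) :
    ⨍ z in pCube0 R, f z = ⨍ z in pCube0 1, f (parDilation n R z) := by
  rw [← preimage_parDilation_pCube0 hR, setAverage_comp_linearMap]
  rw [det_parDilation]
  positivity

noncomputable def pCubeMeasure (n : ℕ) : Measure (EuclideanSpace ℝ (Fin n) × ℝ) :=
  volume[|pCube0 1]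

instance : IsProbabilityMeasure (pCubeMeasure n) :=
  cond_isProbabilityMeasure_of_finite
    ((isOpen_interior.measure_pos volume
      ⟨0, mem_interior_iff_mem_nhds.2 (pCube0_mem_nhds one_pos)⟩).trans_le
        (measure_mono interior_subset)).ne'
    (isBounded_pCube0 1).measure_lt_top.ne

theorem setAverage_pCube0_one_eq_integral (f : EuclideanSpace ℝ (Fin n) × ℝ → ℝ) :
    ⨍ z in pCube0 1, f z = ∫ z, f z ∂pCubeMeasure n :=
  setAverage_eq' volume f _

theorem ae_pCubeMeasure_mem : ∀ᵐ z ∂pCubeMeasure n, z ∈ pCube0 1 :=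
  Measure.smul_absolutelyContinuous.ae_le (ae_restrict_mem (measurableSet_pCube0 1))

theorem Continuous.memLp_pCubeMeasure {f : EuclideanSpace ℝ (Fin n) × ℝ → ℝ}
    (hf : Continuous f) (p : ℝ≥0∞) : MemLp f p (pCubeMeasure n) :=
  have ⟨C, hC⟩ := hf.exists_abs_le_on_pCube0 1
  .of_bound hf.aestronglyMeasurable C (ae_pCubeMeasure_mem.mono hC)

theorem variance_evalPar_pos {P : MvPolynomial (Fin n ⊕ Unit) ℝ} {N : ℕ}
    (hP : P.IsWeightedHomogeneous (parWeight n) N) (hN : N ≠ 0) (hP0 : P ≠ 0) :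
    0 < Var[evalPar P; pCubeMeasure n] := by
  refine (variance_nonneg _ _).lt_of_ne' fun hvar => hP0 ?_
  have hae :=
    ae_eq_integral_of_variance_eq_zero ((continuous_evalPar P).memLp_pCubeMeasure 2) hvar
  have hae' : evalPar P =ᵐ[volume.restrict (interior (pCube0 1))]
      fun _ => (pCubeMeasure n)[evalPar P] :=
    ae_restrict_of_ae_restrict_of_subset interior_subset
      ((Measure.absolutelyContinuous_smul
        (ENNReal.inv_ne_zero.2 (isBounded_pCube0 1).measure_lt_top.ne)).ae_le hae)
  exact eq_zero_of_eventually_evalPar_eq hP hN <|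
    mem_of_superset (interior_mem_nhds.2 (pCube0_mem_nhds one_pos))
      (Measure.eqOn_open_of_ae_eq hae' isOpen_interior (continuous_evalPar P).continuousOn
        continuousOn_const)

theorem variance_div_two_sub_sq_le_setAverage {P : MvPolynomial (Fin n ⊕ Unit) ℝ} {N : ℕ}
    (hP : weightedTotalDegree (parWeight n) P ≤ N) {R ε : ℝ} (hR : 0 < R)
    (hε : ∀ z ∈ pCube0 1, |∑ k ∈ Finset.range N,
      R ^ k * evalPar (weightedHomogeneousComponent (parWeight n) k P) z| ≤ ε) (a : ℝ) :
    (R ^ N) ^ 2 * Var[evalPar (weightedHomogeneousComponent (parWeight n) N P); pCubeMeasure n]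
        / 2 - ε ^ 2
      ≤ ⨍ z in pCube0 R, (evalPar P z - a) ^ 2 := by
  rw [setAverage_pCube0_eq hR, setAverage_pCube0_one_eq_integral]
  simp_rw [evalPar_parDilation_eq_sum hP, Finset.sum_range_succ, add_comm _ (R ^ N * _)]
  rw [← variance_const_mul]
  exact variance_div_two_sub_sq_le_integral
    (((continuous_evalPar _).memLp_pCubeMeasure 2).const_mul (R ^ N))
    (by fun_prop) (ae_pCubeMeasure_mem.mono hε) a

end Parabolic

theorem polynomial_parabolic_growth_general (n : ℕ) (N : ℕ) (hN : 1 ≤ N)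
    (P : MvPolynomial (Fin n ⊕ Unit) ℝ) (hP : P ≠ 0)
    (hdeg : P.weightedTotalDegree (parWeight n) = N) :
    ∃ c : ℝ, 0 < c ∧ ∃ R₀ : ℝ, 1 < R₀ ∧
      ∀ R : ℝ, R₀ ≤ R → ∀ a : ℝ,
        c * R ^ (2 * N) ≤ ⨍ z in pCube0 (n := n) R, (evalPar P z - a) ^ 2 := by
  set P' : ℕ → MvPolynomial (Fin n ⊕ Unit) ℝ := fun k =>
    weightedHomogeneousComponent (parWeight n) k P
  set V := Var[evalPar (P' N); pCubeMeasure n]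
  have hV : 0 < V := variance_evalPar_pos (weightedHomogeneousComponent_isWeightedHomogeneous N P)
    (by omega) (hdeg ▸ weightedHomogeneousComponent_weightedTotalDegree_ne_zero hP)
  obtain ⟨C, hC⟩ := exists_abs_sum_pow_mul_le (s := pCube0 1)
    (fun k => (continuous_evalPar (P' k)).exists_abs_le_on_pCube0 1) N
  have hCV : 0 ≤ 4 * C ^ 2 / V := by positivity
  refine ⟨V / 4, by positivity, 2 + 4 * C ^ 2 / V, by linarith, fun R hR a => ?_⟩
  have hR1 : 1 ≤ R := by linarith
  have hCR : 4 * C ^ 2 ≤ V * R ^ 2 := by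
    have := (div_le_iff₀ hV).1 (show 4 * C ^ 2 / V ≤ R - 1 by linarith)
    nlinarith
  have hpow : R ^ N = R * R ^ (N - 1) := by rw [← pow_succ', Nat.sub_add_cancel hN]
  refine le_trans ?_ (variance_div_two_sub_sq_le_setAverage hdeg.le (by linarith) (hC R hR1) a)
  rw [pow_mul', hpow]
  nlinarith [mul_le_mul_of_nonneg_right hCR (sq_nonneg (R ^ (N - 1)))]

/-- If `p(x,t)` is a polynomial of parabolic degree exactly `N ≥ 1`, then
`⨍_{Q_R} |p − a|² ≥ c R^{2N}` for all large `R` and every constant `a`. -/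
theorem polynomial_parabolic_growth (n : ℕ) (hn : 1 ≤ n) (N : ℕ) (hN : 1 ≤ N)
    (P : MvPolynomial (Fin n ⊕ Unit) ℝ) (hP : P ≠ 0)
    (hdeg : P.weightedTotalDegree (parWeight n) = N) :
    ∃ c : ℝ, 0 < c ∧ ∃ R₀ : ℝ, 1 < R₀ ∧
      ∀ R : ℝ, R₀ ≤ R → ∀ a : ℝ,
        c * R ^ (2 * N) ≤ ⨍ z in pCube0 (n := n) R, (evalPar P z - a) ^ 2 :=
  polynomial_parabolic_growth_general n N hN P hP hdeg
end
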